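/- Let f ∈ A depend only on the single variable u, and let α, β ∈ ℂ. Then the master-formula λ-bracket with generator coefficients P_{(1,0)} = α·f·S₁(f), P_{(0,1)} = β·f·S₂(f), P_{(−1,0)} = −α·f·S₁^{−1}(f), P_{(0,−1)} = −β·f·S₂^{−1}(f), and P_T = 0 otherwise, corresponding to the difference operator P = f(u)(α S₁ + β S₂ − β S₂^{−1} − α S₁^{−1})∘f(u), is skewsymmetric and satisfies the PVA-Jacobi identity for all triples of elements of A; i.e. P is a Hamiltonian difference operator. -/

import Mathlib

/-!
Write `Y_N = S^N f · ∂/∂u_N` and `P_T = c_T · f · S^T f` with `c` odd and finitely supported.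
The master formula becomes `B_T(p, q) = ∑_{M,N} c_{T+M-N} S^T(Y_M p) · Y_N q`, so skewsymmetry is
the oddness of `c` after exchanging `M` and `N`. Since `f` depends on `u` alone, the derivations
`Y_N` commute pairwise, and `S^K ∘ Y_N = Y_{N+K} ∘ S^K`. Hence `X = B_T(p, ·)` and `Z = B_U(g, ·)`
are vector fields `∑_N a_N Y_N` and `∑_N d_N Y_N` in a commuting frame, so `[X, Z]` is the vector
field with coefficients `X(d_N) - Z(a_N)`. Comparing these with the coefficients of
`B_U(B_{T-U}(p,g), ·)` uses only three facts: `Y_K` acts on `B_U(g,h)` as a derivation in each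
argument, `S^U B_T(p,q) = B_{T+U}(p, S^U q)`, and skewsymmetry.
-/

open MvPolynomial

namespace MPVA

/-- The algebra of difference polynomials in `ℓ` generators on a `D`-dimensional lattice:
polynomials over `ℂ` in the variables `u^i_N`, `i ∈ Fin ℓ`, `N ∈ ℤ^D`. -/
abbrev A (ℓ D : ℕ) := MvPolynomial (Fin ℓ × (Fin D → ℤ)) ℂ

variable {ℓ D : ℕ}

/-- The shift automorphism `S^M` sending `u^i_N` to `u^i_{N+M}`. -/
noncomputable def Sh (M : Fin D → ℤ) : A ℓ D ≃ₐ[ℂ] A ℓ D :=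
  renameEquiv ℂ ((Equiv.refl (Fin ℓ)).prodCongr (Equiv.addRight M))

/-- The `α`-th standard basis vector `E_α ∈ ℤ^D`. -/
def E (α : Fin D) : Fin D → ℤ := fun β => if β = α then 1 else 0

/-- Coefficient `B_T(f,g)` of `λ^T` in the master-formula λ-bracket `{f_λ g}` determined
by the generator coefficients `{u^i_λ u^j} = Σ_T (P j i T)·λ^T`:
`{f_λ g} = Σ_{i,j,M,N,T'} (∂g/∂u^j_N)·S^N(P^{ji}_{T'})·S^{N+T'−M}(∂f/∂u^i_M)·λ^{N+T'−M}`. -/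
noncomputable def B (P : Fin ℓ → Fin ℓ → (Fin D → ℤ) → A ℓ D)
    (T : Fin D → ℤ) (f g : A ℓ D) : A ℓ D :=
  ∑ᶠ (i : Fin ℓ) (j : Fin ℓ) (M : Fin D → ℤ) (N : Fin D → ℤ),
    (pderiv (j, N) g) * (Sh N (P j i (T - N + M))) * (Sh T (pderiv (i, M) f))

/-- The family of generator coefficients has only finitely many nonzero members. -/
def FinSupp (P : Fin ℓ → Fin ℓ → (Fin D → ℤ) → A ℓ D) : Prop :=
  {x : (Fin ℓ × Fin ℓ) × (Fin D → ℤ) | P x.1.1 x.1.2 x.2 ≠ 0}.Finite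

/-- The PVA-Jacobi identity for the triple `(f,g,h)`, written coefficient-wise
(for all `T, U ∈ ℤ^D`, the coefficient of `λ^T μ^U` in
`Σ_U {f_λ B_U(g,h)}μ^U − Σ_T {g_μ B_T(f,h)}λ^T = Σ_{T,U} B_U(B_T(f,g),h)λ^{T+U}μ^U`). -/
def Jacobi (P : Fin ℓ → Fin ℓ → (Fin D → ℤ) → A ℓ D) (f g h : A ℓ D) : Prop :=
  ∀ T U : Fin D → ℤ,
    B P T f (B P U g h) - B P U g (B P T f h) = B P U (B P (T - U) f g) h

/-- For `D = 2`: the lattice point `(m,n) ∈ ℤ²`. -/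
def v (m n : ℤ) : Fin 2 → ℤ := ![m, n]

/-- For `D = 2`, `ℓ = 1`: the variable `u_{mn}` of the scalar two-dimensional algebra. -/
noncomputable def uu (m n : ℤ) : A 1 2 := X ((0 : Fin 1), v m n)

open Function

theorem pderiv_pderiv_comm {R σ : Type*} [CommSemiring R] (i j : σ) (p : MvPolynomial σ R) :
    pderiv i (pderiv j p) = pderiv j (pderiv i p) := by
  classical
  induction p using MvPolynomial.induction_on with
  | C a => simp
  | add p q hp hq => simp [hp, hq]
  | mul_X p n hp =>
    have hX : ∀ k l : σ, pderiv k (pderiv l (X n : MvPolynomial σ R)) = 0 := fun k l => by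
      rw [pderiv_X, Pi.single_apply]
      split_ifs <;> simp
    simp only [pderiv_mul, map_add, hp, hX]
    ring

theorem finsum_comm_of_finite {α β M : Type*} [AddCommMonoid M] {F : α → β → M} {s : Set α}
    {t : Set β} (hs : s.Finite) (ht : t.Finite) (hF : ∀ a b, F a b ≠ 0 → a ∈ s ∧ b ∈ t) :
    ∑ᶠ (a) (b), F a b = ∑ᶠ (b) (a), F a b := by
  have hF : HasFiniteSupport (uncurry F) := (hs.prod ht).subset fun x hx => hF x.1 x.2 hx
  calc ∑ᶠ (a) (b), F a b = ∑ᶠ x : α × β, uncurry F x := (finsum_curry _ hF).symm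
    _ = ∑ᶠ y : β × α, uncurry F y.swap := (finsum_comp_equiv (Equiv.prodComm β α)).symm
    _ = ∑ᶠ (b) (a), F a b := finsum_curry _ (hF.comp_of_injective Prod.swap_injective)

theorem Sh_Sh (M N : Fin D → ℤ) (p : A ℓ D) : Sh M (Sh N p) = Sh (N + M) p := by
  simp only [Sh, renameEquiv_apply, rename_rename]
  congr 2
  ext x <;> simp [add_assoc]

theorem Sh_zero (p : A ℓ D) : Sh 0 p = p := by
  simp [Sh, Equiv.addRight_zero]

theorem pderiv_Sh (i : Fin ℓ) (N K : Fin D → ℤ) (p : A ℓ D) :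
    pderiv (i, N) (Sh K p) = Sh K (pderiv (i, N - K) p) := by
  have hinj : Injective ((Equiv.refl (Fin ℓ)).prodCongr (Equiv.addRight K)) := Equiv.injective _
  have h := pderiv_rename hinj (i, N - K) p
  simp only [Equiv.prodCongr_apply, Prod.map_apply, Equiv.coe_refl, id, Equiv.coe_addRight,
    sub_add_cancel] at h
  exact h

theorem hasFiniteSupport_pderiv (i : Fin ℓ) (p : A ℓ D) :
    HasFiniteSupport fun N : Fin D → ℤ => pderiv (i, N) p :=
  (p.vars.finite_toSet.preimage (Prod.mk_right_injective i).injOn).subset fun _ hN =>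
    not_not.mp (mt pderiv_eq_zero_of_notMem_vars hN)

noncomputable def scaledPderiv (f : A 1 D) (N : Fin D → ℤ) : Derivation ℂ (A 1 D) (A 1 D) :=
  Sh N f • pderiv (0, N)

theorem hasFiniteSupport_scaledPderiv (f q : A 1 D) :
    HasFiniteSupport fun N : Fin D → ℤ => scaledPderiv f N q :=
  (hasFiniteSupport_pderiv 0 q).mul_right _

section ScaledPderiv

variable {f : A 1 D}

theorem scaledPderiv_apply (N : Fin D → ℤ) (q : A 1 D) :
    scaledPderiv f N q = Sh N f * pderiv (0, N) q := rfl

theorem Sh_scaledPderiv (K N : Fin D → ℤ) (q : A 1 D) :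
    Sh K (scaledPderiv f N q) = scaledPderiv f (N + K) (Sh K q) := by
  simp only [scaledPderiv_apply, map_mul, Sh_Sh, pderiv_Sh, add_sub_cancel_right]

theorem scaledPderiv_Sh (N K : Fin D → ℤ) (q : A 1 D) :
    scaledPderiv f N (Sh K q) = Sh K (scaledPderiv f (N - K) q) := by
  rw [Sh_scaledPderiv, sub_add_cancel]

variable (hf : ∀ N : Fin D → ℤ, N ≠ 0 → pderiv ((0 : Fin 1), N) f = 0)
include hf

/-- Since `f` depends on `u` only, `∂/∂u_M (S^N f) = 0` for `M ≠ N`. -/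
theorem scaledPderiv_comm (M N : Fin D → ℤ) (q : A 1 D) :
    scaledPderiv f M (scaledPderiv f N q) = scaledPderiv f N (scaledPderiv f M q) := by
  rcases eq_or_ne M N with rfl | hMN
  · rfl
  have key : ∀ a b : Fin D → ℤ, a ≠ b → scaledPderiv f a (scaledPderiv f b q) =
      Sh a f * (Sh b f * pderiv (0, a) (pderiv (0, b) q)) := fun a b hab => by
    simp only [scaledPderiv_apply, pderiv_mul, pderiv_Sh, hf (a - b) (sub_ne_zero.mpr hab),
      map_zero, zero_mul, zero_add]
  rw [key M N hMN, key N M hMN.symm, pderiv_pderiv_comm]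
  ring

end ScaledPderiv

noncomputable def vecField (f : A 1 D) (a : (Fin D → ℤ) → A 1 D) : A 1 D →ₗ[ℂ] A 1 D where
  toFun q := ∑ᶠ N, a N * scaledPderiv f N q
  map_add' q r := by
    simp only [map_add, mul_add]
    exact finsum_add_distrib ((hasFiniteSupport_scaledPderiv f q).fun_mul_right a)
      ((hasFiniteSupport_scaledPderiv f r).fun_mul_right a)
  map_smul' z q := by
    simp only [Derivation.map_smul, mul_smul_comm, RingHom.id_apply, smul_finsum]

section VecField

variable {f : A 1 D}

theorem vecField_apply (a : (Fin D → ℤ) → A 1 D) (q : A 1 D) :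
    vecField f a q = ∑ᶠ N, a N * scaledPderiv f N q := rfl

variable (hf : ∀ N : Fin D → ℤ, N ≠ 0 → pderiv ((0 : Fin 1), N) f = 0)
include hf

theorem scaledPderiv_vecField (K : Fin D → ℤ) (a : (Fin D → ℤ) → A 1 D) (h : A 1 D) :
    scaledPderiv f K (vecField f a h) =
      vecField f (fun N => scaledPderiv f K (a N)) h + vecField f a (scaledPderiv f K h) := by
  simp only [vecField_apply]
  rw [map_finsum _ ((hasFiniteSupport_scaledPderiv f h).fun_mul_right a),
    ← finsum_add_distrib ((hasFiniteSupport_scaledPderiv f h).fun_mul_right _)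
      ((hasFiniteSupport_scaledPderiv f _).fun_mul_right a)]
  refine finsum_congr fun N => ?_
  rw [Derivation.leibniz, smul_eq_mul, smul_eq_mul, scaledPderiv_comm hf K N]
  ring

theorem vecField_sub_vecField {a d : (Fin D → ℤ) → A 1 D} (ha : HasFiniteSupport a)
    (hd : HasFiniteSupport d) (h : A 1 D) :
    vecField f a (vecField f d h) - vecField f d (vecField f a h) =
      vecField f (fun N => vecField f a (d N) - vecField f d (a N)) h := by
  have expand : ∀ a d : (Fin D → ℤ) → A 1 D, HasFiniteSupport a →
      vecField f a (vecField f d h) = vecField f (fun N => vecField f a (d N)) h +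
        ∑ᶠ (K) (N), a K * (d N * scaledPderiv f N (scaledPderiv f K h)) := by
    intro a d ha
    rw [vecField_apply a]
    simp only [scaledPderiv_vecField hf, mul_add]
    rw [finsum_add_distrib (ha.fun_mul_left _) (ha.fun_mul_left _)]
    simp only [vecField_apply, mul_finsum, finsum_mul]
    rw [finsum_comm_of_finite ha (hasFiniteSupport_scaledPderiv f h)]
    · simp only [mul_assoc]
    · exact fun K N hKN =>
        ⟨left_ne_zero_of_mul hKN, right_ne_zero_of_mul (right_ne_zero_of_mul hKN)⟩
  have hswap : ∑ᶠ (K) (N), a K * (d N * scaledPderiv f N (scaledPderiv f K h)) =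
      ∑ᶠ (K) (N), d K * (a N * scaledPderiv f N (scaledPderiv f K h)) := by
    rw [finsum_comm_of_finite ha hd]
    swap
    · exact fun K N hKN =>
        ⟨left_ne_zero_of_mul hKN, left_ne_zero_of_mul (right_ne_zero_of_mul hKN)⟩
    refine finsum_congr fun K => finsum_congr fun N => ?_
    rw [scaledPderiv_comm hf]
    ring
  rw [expand a d ha, expand d a hd, hswap, add_sub_add_right_eq_sub]
  simp only [vecField_apply, sub_mul]
  exact (finsum_sub_distrib ((hasFiniteSupport_scaledPderiv f h).fun_mul_right _)
    ((hasFiniteSupport_scaledPderiv f h).fun_mul_right _)).symm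

end VecField

noncomputable def bracketCoeff (c : (Fin D → ℤ) → ℂ) (f : A 1 D) (T : Fin D → ℤ) (p : A 1 D)
    (N : Fin D → ℤ) : A 1 D :=
  ∑ᶠ M, c (T + M - N) • Sh T (scaledPderiv f M p)

/-- `B_T(p, ·)` for the operator `f ∘ (∑_K c_K S^K) ∘ f`, as a vector field in the frame `(Y_N)`. -/
noncomputable def bracket (c : (Fin D → ℤ) → ℂ) (f : A 1 D) (T : Fin D → ℤ) (p : A 1 D) :
    A 1 D →ₗ[ℂ] A 1 D :=
  vecField f (bracketCoeff c f T p)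

section Bracket

variable {c : (Fin D → ℤ) → ℂ} {f : A 1 D}

theorem hasFiniteSupport_smul_Sh_scaledPderiv (w : (Fin D → ℤ) → ℂ) (T : Fin D → ℤ)
    (p : A 1 D) : HasFiniteSupport fun M => w M • Sh T (scaledPderiv f M p) :=
  ((hasFiniteSupport_scaledPderiv f p).fun_comp (map_zero (Sh T))).fun_smul_right w

theorem hasFiniteSupport_bracketCoeff (hc_fin : HasFiniteSupport c) (T : Fin D → ℤ) (p : A 1 D) :
    HasFiniteSupport (bracketCoeff c f T p) := by
  refine ((hasFiniteSupport_scaledPderiv f p).image2 (fun M K => T + M - K) hc_fin).subset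
    fun N hN => ?_
  obtain ⟨M, hM⟩ : ∃ M, c (T + M - N) • Sh T (scaledPderiv f M p) ≠ 0 := by
    by_contra! h
    exact hN (finsum_eq_zero_of_forall_eq_zero h)
  exact ⟨M, fun h : scaledPderiv f M p = 0 => right_ne_zero_of_smul hM (by rw [h, map_zero]),
    T + M - N, left_ne_zero_of_smul hM, sub_sub_cancel _ _⟩

theorem hasFiniteSupport_bracket_summand (T : Fin D → ℤ) (p q : A 1 D) :
    HasFiniteSupport fun x : (Fin D → ℤ) × (Fin D → ℤ) =>
      c (T + x.1 - x.2) • (Sh T (scaledPderiv f x.1 p) * scaledPderiv f x.2 q) :=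
  ((hasFiniteSupport_scaledPderiv f p).prod (hasFiniteSupport_scaledPderiv f q)).subset
    fun _ hx => ⟨fun h => hx (by simp [h]), fun h => hx (by simp [h])⟩

theorem bracket_eq_finsum (T : Fin D → ℤ) (p q : A 1 D) :
    bracket c f T p q = ∑ᶠ x : (Fin D → ℤ) × (Fin D → ℤ),
      c (T + x.1 - x.2) • (Sh T (scaledPderiv f x.1 p) * scaledPderiv f x.2 q) := by
  simp only [bracket, vecField_apply, bracketCoeff, finsum_mul, smul_mul_assoc]
  rw [finsum_comm_of_finite (hasFiniteSupport_scaledPderiv f q)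
      (hasFiniteSupport_scaledPderiv f p), finsum_curry _ (hasFiniteSupport_bracket_summand T p q)]
  exact fun N M hMN => ⟨fun h => hMN (by simp [h]), fun h => hMN (by simp [h])⟩

theorem bracket_zero_left (T : Fin D → ℤ) (q : A 1 D) : bracket c f T 0 q = 0 := by
  simp [bracket_eq_finsum]

theorem B_eq_bracket {P : Fin 1 → Fin 1 → (Fin D → ℤ) → A 1 D}
    (hP : ∀ i j K, P i j K = c K • (f * Sh K f)) (T : Fin D → ℤ) (p q : A 1 D) :
    B P T p q = bracket c f T p q := by
  rw [B, bracket_eq_finsum, finsum_unique, finsum_unique,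
    finsum_curry _ (hasFiniteSupport_bracket_summand T p q)]
  refine finsum_congr fun M => finsum_congr fun N => ?_
  simp only [hP, map_smul, map_mul, Sh_Sh, scaledPderiv_apply, smul_mul_assoc, mul_smul_comm,
    Fin.default_eq_zero]
  rw [show T - N + M + N = M + T by abel, show T - N + M = T + M - N by abel]
  congr 1
  ring

theorem bracket_skew (hc_odd : ∀ K, c (-K) = -c K) (T : Fin D → ℤ) (p q : A 1 D) :
    bracket c f (-T) q p = -Sh (-T) (bracket c f T p q) := by
  rw [bracket_eq_finsum, bracket_eq_finsum, AddEquivClass.map_finsum, ← finsum_neg_distrib]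
  refine Eq.trans ?_ (finsum_comp_equiv (Equiv.prodComm _ _))
  refine finsum_congr fun x => ?_
  simp only [Equiv.prodComm_apply, Prod.fst_swap, Prod.snd_swap, map_smul, map_mul, Sh_Sh,
    add_neg_cancel, Sh_zero]
  rw [show -T + x.1 - x.2 = -(T + x.2 - x.1) by abel, hc_odd, neg_smul, mul_comm]

theorem Sh_bracket (U T : Fin D → ℤ) (p q : A 1 D) :
    Sh U (bracket c f T p q) = bracket c f (T + U) p (Sh U q) := by
  rw [bracket_eq_finsum, bracket_eq_finsum, AddEquivClass.map_finsum]
  refine Eq.trans ?_ (finsum_comp_equiv ((Equiv.refl _).prodCongr (Equiv.addRight U)))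
  refine finsum_congr fun x => ?_
  simp only [Equiv.prodCongr_apply, Prod.map_fst, Prod.map_snd, Equiv.coe_refl, id,
    Equiv.coe_addRight, map_smul, map_mul, Sh_Sh, Sh_scaledPderiv]
  rw [show T + U + x.1 - (x.2 + U) = T + x.1 - x.2 by abel,
    show x.1 + T + U = x.1 + (T + U) by abel]

theorem bracket_Sh (T U : Fin D → ℤ) (p q : A 1 D) :
    bracket c f T p (Sh U q) = Sh U (bracket c f (T - U) p q) := by
  rw [Sh_bracket, sub_add_cancel]

section Jacobi

variable (hf : ∀ N : Fin D → ℤ, N ≠ 0 → pderiv ((0 : Fin 1), N) f = 0)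
include hf

theorem scaledPderiv_bracketCoeff (K U : Fin D → ℤ) (g : A 1 D) (N : Fin D → ℤ) :
    scaledPderiv f K (bracketCoeff c f U g N) =
      bracketCoeff c f U (scaledPderiv f (K - U) g) N := by
  rw [bracketCoeff, bracketCoeff, map_finsum _ (hasFiniteSupport_smul_Sh_scaledPderiv _ U g)]
  refine finsum_congr fun M => ?_
  rw [Derivation.map_smul, scaledPderiv_Sh, scaledPderiv_comm hf]

theorem scaledPderiv_bracket (K U : Fin D → ℤ) (g h : A 1 D) :
    scaledPderiv f K (bracket c f U g h) =
      bracket c f U (scaledPderiv f (K - U) g) h + bracket c f U g (scaledPderiv f K h) := by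
  rw [bracket, scaledPderiv_vecField hf]
  simp only [scaledPderiv_bracketCoeff hf]
  rfl

theorem bracketCoeff_jacobi (hc_odd : ∀ K, c (-K) = -c K) (T U : Fin D → ℤ) (p g : A 1 D)
    (N : Fin D → ℤ) :
    bracket c f T p (bracketCoeff c f U g N) - bracket c f U g (bracketCoeff c f T p N) =
      bracketCoeff c f U (bracket c f (T - U) p g) N := by
  have hpg : bracket c f T p (bracketCoeff c f U g N) =
      ∑ᶠ M, c (U + M - N) • Sh U (bracket c f (T - U) p (scaledPderiv f M g)) := by
    rw [bracketCoeff, map_finsum _ (hasFiniteSupport_smul_Sh_scaledPderiv _ U g)]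
    simp only [map_smul, bracket_Sh]
  have hgp : bracket c f U g (bracketCoeff c f T p N) =
      -∑ᶠ M, c (T + M - N) • Sh U (bracket c f (T - U) (scaledPderiv f M p) g) := by
    rw [bracketCoeff, map_finsum _ (hasFiniteSupport_smul_Sh_scaledPderiv _ T p),
      ← finsum_neg_distrib]
    refine finsum_congr fun M => ?_
    rw [map_smul, bracket_Sh, ← smul_neg, show U - T = -(T - U) by abel, bracket_skew hc_odd,
      map_neg, Sh_Sh, show -(T - U) + T = U by abel]
  have hshift : ∑ᶠ M, c (U + M - N) •
        Sh U (bracket c f (T - U) (scaledPderiv f (M - (T - U)) p) g) =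
      ∑ᶠ M, c (T + M - N) • Sh U (bracket c f (T - U) (scaledPderiv f M p) g) := by
    refine Eq.trans (finsum_congr fun M => ?_) (finsum_comp_equiv (Equiv.subRight (T - U)))
    rw [Equiv.subRight_apply, show T + (M - (T - U)) - N = U + M - N by abel]
  have hfin : HasFiniteSupport fun M => c (U + M - N) •
      Sh U (bracket c f (T - U) (scaledPderiv f (M - (T - U)) p) g) :=
    (((hasFiniteSupport_scaledPderiv f p).comp_of_injective sub_left_injective).fun_comp
      (g := fun w => Sh U (bracket c f (T - U) w g)) (by rw [bracket_zero_left, map_zero])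
      ).fun_smul_right _
  -- Expanding `Y_M (B_{T-U}(p, g))` yields `hpg` plus a shifted copy of `-hgp`.
  rw [hpg, hgp, bracketCoeff]
  simp only [scaledPderiv_bracket hf, map_add, smul_add]
  rw [finsum_add_distrib hfin (((hasFiniteSupport_scaledPderiv f g).fun_comp
    (g := fun w => Sh U (bracket c f (T - U) p w)) (by simp)).fun_smul_right _), hshift]
  abel

theorem bracket_jacobi (hc_fin : HasFiniteSupport c) (hc_odd : ∀ K, c (-K) = -c K)
    (T U : Fin D → ℤ) (p g h : A 1 D) :
    bracket c f T p (bracket c f U g h) - bracket c f U g (bracket c f T p h) =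
      bracket c f U (bracket c f (T - U) p g) h :=
  calc _ = vecField f (fun N => bracket c f T p (bracketCoeff c f U g N) -
          bracket c f U g (bracketCoeff c f T p N)) h :=
        vecField_sub_vecField hf (hasFiniteSupport_bracketCoeff hc_fin T p)
          (hasFiniteSupport_bracketCoeff hc_fin U g) h
    _ = _ := by simp only [bracketCoeff_jacobi hf hc_odd]; rfl

end Jacobi

end Bracket

def firstOrderCoeff (α β : ℂ) (T : Fin 2 → ℤ) : ℂ :=
  if T = v 1 0 then α else if T = v 0 1 then β
  else if T = v (-1) 0 then -α else if T = v 0 (-1) then -β else 0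

theorem neg_v (m n : ℤ) : -v m n = v (-m) (-n) := by
  ext i
  fin_cases i <;> rfl

theorem v_inj {m n m' n' : ℤ} : v m n = v m' n' ↔ m = m' ∧ n = n' := by
  simp [v, funext_iff, Fin.forall_fin_two]

theorem firstOrderCoeff_neg (α β : ℂ) (T : Fin 2 → ℤ) :
    firstOrderCoeff α β (-T) = -firstOrderCoeff α β T := by
  have h : ∀ m n : ℤ, -T = v m n ↔ T = v (-m) (-n) := fun m n => by
    rw [neg_eq_iff_eq_neg, neg_v]
  simp only [firstOrderCoeff, h, neg_neg, neg_zero]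
  split_ifs <;> simp_all [v_inj]

theorem hasFiniteSupport_firstOrderCoeff (α β : ℂ) :
    HasFiniteSupport (firstOrderCoeff α β) :=
  (Set.toFinite {v 1 0, v 0 1, v (-1) 0, v 0 (-1)}).subset fun T hT => by
    simp only [mem_support, firstOrderCoeff] at hT
    split_ifs at hT <;> simp_all

/-- for `f = f(u)` and constants `α, β ∈ ℂ`, the operator
`P = f(u)(α S₁ + β S₂ − β S₂^{−1} − α S₁^{−1})∘f(u)` is Hamiltonian: its master-formula
λ-bracket is skewsymmetric and satisfies the PVA-Jacobi identity for all triples. -/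
theorem first_order_general_is_hamiltonian (f : A 1 2)
    (hfdep : ∀ N : Fin 2 → ℤ, N ≠ 0 → pderiv ((0 : Fin 1), N) f = 0)
    (α β : ℂ)
    (P : Fin 1 → Fin 1 → (Fin 2 → ℤ) → A 1 2)
    (hP : P = fun _ _ T =>
      if T = v 1 0 then C α * (f * Sh (v 1 0) f)
      else if T = v 0 1 then C β * (f * Sh (v 0 1) f)
      else if T = v (-1) 0 then -(C α * (f * Sh (v (-1) 0) f))
      else if T = v 0 (-1) then -(C β * (f * Sh (v 0 (-1)) f))
      else 0) :
    (∀ (p q : A 1 2) (T : Fin 2 → ℤ), B P (-T) q p = - Sh (-T) (B P T p q)) ∧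
    (∀ p q r : A 1 2, Jacobi P p q r) := by
  have hPc : ∀ i j K, P i j K = firstOrderCoeff α β K • (f * Sh K f) := by
    intro i j K
    subst hP
    simp only [firstOrderCoeff]
    split_ifs <;> subst_vars <;> simp [C_mul']
  simp only [Jacobi, B_eq_bracket hPc]
  exact ⟨fun p q T => bracket_skew (firstOrderCoeff_neg α β) T p q,
    fun p q r T U => bracket_jacobi hfdep (hasFiniteSupport_firstOrderCoeff α β)
      (firstOrderCoeff_neg α β) T U p q r⟩

end MPVA
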